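/- Let 0 < r ≤ 1/2 and let l₁, l₂ be unit segments lying entirely outside the open disk B_r of radius r about the origin O, at distances δ₁, δ₂ from O, in directions α₁, α₂. If |α₁ − α₂| (mod π) ≥ arcsin(δ₁/r) + arcsin(δ₂/r), then the interiors of Δ₁ ∩ B_r and Δ₂ ∩ B_r are disjoint, where Δᵢ is the triangle with base lᵢ and apex O. -/

import Mathlib

/-!
A point `x = R • dirVec θ` (`R > 0`) of the triangle with apex `O` and base `lᵢ` is `t • y` with
`y ∈ lᵢ`, `‖y‖ ≥ r`, and `y` lies at distance `δᵢ` from the parallel to `lᵢ` through `O`; hence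
`R * |sin (θ - αᵢ)| ≤ δᵢ * R / r`, i.e. `|sin (θ - αᵢ)| ≤ δᵢ / r`.
A common interior point yields an interval of directions `θ` satisfying both bounds. As
`u ↦ arcsin |sin u|` is subadditive (it is the distance from `u` to `πℤ`), for such `θ`

  `arcsin |sin (α₁ - α₂)| ≤ arcsin |sin (θ - α₁)| + arcsin |sin (θ - α₂)|
    ≤ arcsin (δ₁ / r) + arcsin (δ₂ / r) ≤ min |α₁ - α₂| (π - |α₁ - α₂|) ≤ arcsin |sin (α₁ - α₂)|`,

so `|sin (θ - α₁)|` is constant on an interval, which the identity theorem forbids.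
-/

open MeasureTheory Metric Set

/-- The unit vector in direction `α`. -/
noncomputable def dirVec (α : ℝ) : EuclideanSpace ℝ (Fin 2) :=
  (WithLp.equiv 2 (Fin 2 → ℝ)).symm ![Real.cos α, Real.sin α]

open Real Filter Topology

theorem exists_smul_mem_segment_of_mem_convexHull {𝕜 E : Type*} [Field 𝕜] [LinearOrder 𝕜]
    [IsStrictOrderedRing 𝕜] [AddCommGroup E] [Module 𝕜 E] {p q x : E}
    (hx : x ∈ convexHull 𝕜 {p, q, 0}) :
    ∃ t ∈ Icc (0 : 𝕜) 1, ∃ y ∈ segment 𝕜 p q, x = t • y := by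
  rw [show ({p, q, 0} : Set E) = insert 0 {p, q} by ext; simp; tauto,
    convexHull_insert (insert_nonempty p {q}), convexHull_pair, convexJoin_singleton_left] at hx
  obtain ⟨y, hy, hxy⟩ := mem_iUnion₂.1 hx
  rw [segment_eq_image'] at hxy
  obtain ⟨t, ht, rfl⟩ := hxy
  exact ⟨t, ht, y, hy, by simp⟩

section InnerProductSpace

variable {E : Type*} [NormedAddCommGroup E] [InnerProductSpace ℝ E] {n p q : E}

theorem inner_eq_of_mem_affineSpan_pair {y : E} (h : inner ℝ n p = inner ℝ n q)
    (hy : y ∈ line[ℝ, p, q]) : inner ℝ n y = inner ℝ n p := by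
  obtain ⟨t, rfl⟩ := mem_affineSpan_pair_iff_exists_lineMap_eq.1 hy
  simp [AffineMap.lineMap_apply_module, inner_add_right, inner_smul_right, h]
  ring

theorem abs_inner_le_infDist_affineSpan_pair (hn : ‖n‖ ≤ 1) (h : inner ℝ n p = inner ℝ n q) :
    |inner ℝ n p| ≤ infDist 0 (line[ℝ, p, q] : Set E) := by
  refine (le_infDist ⟨p, left_mem_affineSpan_pair ℝ p q⟩).2 fun y hy => ?_
  rw [← inner_eq_of_mem_affineSpan_pair h hy, dist_zero_left]
  calc |inner ℝ n y| ≤ ‖n‖ * ‖y‖ := abs_real_inner_le_norm n y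
    _ ≤ ‖y‖ := mul_le_of_le_one_left (norm_nonneg y) hn

theorem abs_inner_mul_le_of_mem_convexHull {x : E} {r δ : ℝ} (hr : 0 ≤ r)
    (hout : segment ℝ p q ∩ ball 0 r = ∅) (h : inner ℝ n p = inner ℝ n q)
    (hδ : |inner ℝ n p| ≤ δ) (hx : x ∈ convexHull ℝ {p, q, 0}) :
    |inner ℝ n x| * r ≤ δ * ‖x‖ := by
  obtain ⟨t, ⟨ht₀, -⟩, y, hy, rfl⟩ := exists_smul_mem_segment_of_mem_convexHull hx
  have hyr : r ≤ ‖y‖ := by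
    by_contra! hlt
    exact hout.subset ⟨hy, mem_ball_zero_iff.2 hlt⟩
  have hny : inner ℝ n y = inner ℝ n p := inner_eq_of_mem_affineSpan_pair h
    (convexHull_subset_affineSpan _ (by rwa [convexHull_pair]))
  rw [inner_smul_right, hny, abs_mul, abs_of_nonneg ht₀, norm_smul, Real.norm_of_nonneg ht₀]
  calc t * |inner ℝ n p| * r ≤ t * δ * r := by gcongr
    _ ≤ t * δ * ‖y‖ := by gcongr; exact mul_nonneg ht₀ ((abs_nonneg _).trans hδ)
    _ = δ * (t * ‖y‖) := by ring

end InnerProductSpace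

theorem inner_dirVec_dirVec (a b : ℝ) : inner ℝ (dirVec a) (dirVec b) = cos (b - a) := by
  simp [dirVec, PiLp.inner_apply, Fin.sum_univ_two, cos_sub]

theorem norm_dirVec (a : ℝ) : ‖dirVec a‖ = 1 := by
  have h := real_inner_self_eq_norm_sq (dirVec a)
  rw [inner_dirVec_dirVec, sub_self, cos_zero] at h
  nlinarith [norm_nonneg (dirVec a)]

theorem continuous_dirVec : Continuous dirVec :=
  (PiLp.continuous_toLp 2 _).comp (by fun_prop)

theorem exists_eq_norm_smul_dirVec (x : EuclideanSpace ℝ (Fin 2)) : ∃ β, x = ‖x‖ • dirVec β := by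
  set z : ℂ := ⟨x 0, x 1⟩
  have hz : ‖z‖ = ‖x‖ := by
    rw [Complex.norm_def, Complex.normSq_apply, EuclideanSpace.norm_eq, Fin.sum_univ_two]
    simp [z, sq]
  refine ⟨z.arg, ?_⟩
  ext i
  fin_cases i
  · simp [dirVec, ← hz, Complex.norm_mul_cos_arg, z]
  · simp [dirVec, ← hz, Complex.norm_mul_sin_arg, z]

theorem exists_eventually_smul_dirVec_mem {U : Set (EuclideanSpace ℝ (Fin 2))} (hU : IsOpen U)
    (hne : U.Nonempty) : ∃ R : ℝ, 0 < R ∧ ∃ β, ∀ᶠ θ in 𝓝 β, R • dirVec θ ∈ U := by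
  obtain ⟨x, hxU, hx0⟩ := (dense_compl_singleton 0).inter_open_nonempty U hU hne
  obtain ⟨β, hβ⟩ := exists_eq_norm_smul_dirVec x
  refine ⟨‖x‖, norm_pos_iff.2 hx0, β, ?_⟩
  have hxβ : ‖x‖ • dirVec β ∈ U := by rwa [← hβ]
  exact (continuous_dirVec.const_smul ‖x‖).continuousAt.eventually_mem (hU.mem_nhds hxβ)

theorem inner_dirVec_add_pi_div_two_smul_dirVec (α R θ : ℝ) :
    inner ℝ (dirVec (α + π / 2)) (R • dirVec θ) = R * sin (θ - α) := by
  rw [inner_smul_right, inner_dirVec_dirVec, ← sub_sub, cos_sub_pi_div_two]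

theorem abs_sin_sub_le_of_smul_dirVec_mem {r α R θ : ℝ} {p : EuclideanSpace ℝ (Fin 2)}
    (hr : 0 < r) (hout : segment ℝ p (p + dirVec α) ∩ ball 0 r = ∅) (hR : 0 < R)
    (hx : R • dirVec θ ∈ convexHull ℝ {p, p + dirVec α, 0}) :
    |sin (θ - α)| ≤ infDist 0 (line[ℝ, p, p + dirVec α] : Set (EuclideanSpace ℝ (Fin 2))) / r := by
  have hn : inner ℝ (dirVec (α + π / 2)) p = inner ℝ (dirVec (α + π / 2)) (p + dirVec α) := by
    simpa [inner_add_right] using inner_dirVec_add_pi_div_two_smul_dirVec α 1 α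
  have h := abs_inner_mul_le_of_mem_convexHull hr.le hout hn
    (abs_inner_le_infDist_affineSpan_pair (norm_dirVec _).le hn) hx
  rw [inner_dirVec_add_pi_div_two_smul_dirVec, norm_smul, norm_dirVec, abs_mul,
    abs_of_pos hR, Real.norm_of_nonneg hR.le, mul_one, mul_assoc, mul_comm _ R] at h
  rw [le_div_iff₀ hr]
  exact le_of_mul_le_mul_left h hR

theorem sin_arcsin_abs_sin (u : ℝ) : sin (arcsin |sin u|) = |sin u| :=
  sin_arcsin (by linarith [abs_nonneg (sin u)]) (abs_sin_le_one u)

theorem cos_arcsin_abs_sin (u : ℝ) : cos (arcsin |sin u|) = |cos u| := by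
  rw [cos_arcsin, sq_abs, ← cos_sq', sqrt_sq_eq_abs]

theorem arcsin_abs_sin_add_le (u v : ℝ) :
    arcsin |sin (u + v)| ≤ arcsin |sin u| + arcsin |sin v| := by
  set a := arcsin |sin u|
  set b := arcsin |sin v|
  have ha : 0 ≤ a := arcsin_nonneg.2 (abs_nonneg _)
  have hb : 0 ≤ b := arcsin_nonneg.2 (abs_nonneg _)
  rcases le_or_gt (π / 2) (a + b) with hab | hab
  · exact (arcsin_le_pi_div_two _).trans hab
  have hsin : |sin (u + v)| ≤ sin (a + b) :=
    calc |sin (u + v)| ≤ |sin u| * |cos v| + |cos u| * |sin v| := by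
          rw [sin_add, ← abs_mul, ← abs_mul]; exact abs_add_le _ _
      _ = sin (a + b) := by
          rw [sin_add, sin_arcsin_abs_sin, sin_arcsin_abs_sin, cos_arcsin_abs_sin,
            cos_arcsin_abs_sin]
  calc arcsin |sin (u + v)| ≤ arcsin (sin (a + b)) := monotone_arcsin hsin
    _ = a + b := arcsin_sin (by linarith) hab.le

theorem arcsin_abs_sin_sub_le (u v : ℝ) :
    arcsin |sin (u - v)| ≤ arcsin |sin u| + arcsin |sin v| := by
  simpa [sub_eq_add_neg, sin_neg] using arcsin_abs_sin_add_le u (-v)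

theorem min_abs_le_arcsin_abs_sin (t : ℝ) : min |t| (π - |t|) ≤ arcsin |sin t| := by
  rcases le_or_gt π |t| with ht | ht
  · exact (min_le_right _ _).trans ((sub_nonpos.2 ht).trans (arcsin_nonneg.2 (abs_nonneg _)))
  have hsin : sin |t| = |sin t| := by
    rw [← abs_of_nonneg (sin_nonneg_of_nonneg_of_le_pi (abs_nonneg t) ht.le)]
    rcases abs_choice t with h | h <;> rw [h]
    rw [sin_neg, abs_neg]
  have hmin : sin (min |t| (π - |t|)) = |sin t| := by
    rcases min_choice |t| (π - |t|) with h | h <;> rw [h]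
    · exact hsin
    · rw [sin_pi_sub, hsin]
  rw [← hmin, arcsin_sin]
  · linarith [le_min (abs_nonneg t) (sub_pos.2 ht).le, pi_pos]
  · linarith [min_le_left |t| (π - |t|), min_le_right |t| (π - |t|)]

theorem not_eventually_abs_sin_sub_eq (α β c : ℝ) : ¬ ∀ᶠ θ in 𝓝 β, |sin (θ - α)| = c := by
  intro h
  have heq : (fun θ => sin (θ - α) ^ 2) = fun _ => c ^ 2 :=
    AnalyticOnNhd.eq_of_eventuallyEq (fun θ _ => by fun_prop) analyticOnNhd_const
      (h.mono fun θ hθ => by simp only; rw [← hθ, sq_abs])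
  have h₀ := congrFun heq α
  have h₁ := congrFun heq (α + π / 2)
  simp only [sub_self, sin_zero, add_sub_cancel_left, sin_pi_div_two] at h₀ h₁
  linarith

theorem interior_parts_disjoint_general (r α₁ α₂ δ₁ δ₂ : ℝ)
    (p₁ p₂ : EuclideanSpace ℝ (Fin 2))
    (hr1 : 0 < r)
    (hout₁ : segment ℝ p₁ (p₁ + dirVec α₁) ∩ ball 0 r = ∅)
    (hout₂ : segment ℝ p₂ (p₂ + dirVec α₂) ∩ ball 0 r = ∅)
    (hδ₁ : Metric.infDist 0
      (affineSpan ℝ {p₁, p₁ + dirVec α₁} : Set (EuclideanSpace ℝ (Fin 2))) = δ₁)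
    (hδ₂ : Metric.infDist 0
      (affineSpan ℝ {p₂, p₂ + dirVec α₂} : Set (EuclideanSpace ℝ (Fin 2))) = δ₂)
    (hsep : Real.arcsin (δ₁ / r) + Real.arcsin (δ₂ / r) ≤
      min |α₁ - α₂| (Real.pi - |α₁ - α₂|)) :
    interior ((convexHull ℝ {p₁, p₁ + dirVec α₁, (0 : EuclideanSpace ℝ (Fin 2))}) ∩ ball 0 r) ∩
      interior ((convexHull ℝ {p₂, p₂ + dirVec α₂, (0 : EuclideanSpace ℝ (Fin 2))}) ∩ ball 0 r)
      = ∅ := by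
  by_contra hne
  obtain ⟨R, hR, β, hβ⟩ := exists_eventually_smul_dirVec_mem
    (isOpen_interior.inter isOpen_interior) (nonempty_iff_ne_empty.2 hne)
  refine not_eventually_abs_sin_sub_eq α₁ β (sin (arcsin (δ₁ / r))) (hβ.mono fun θ hθ => ?_)
  have hb₁ := abs_sin_sub_le_of_smul_dirVec_mem hr1 hout₁ hR (interior_subset hθ.1).1
  have hb₂ := abs_sin_sub_le_of_smul_dirVec_mem hr1 hout₂ hR (interior_subset hθ.2).1
  rw [hδ₁] at hb₁
  rw [hδ₂] at hb₂
  have htri := arcsin_abs_sin_sub_le (θ - α₂) (θ - α₁)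
  rw [sub_sub_sub_cancel_left] at htri
  have hsq : arcsin |sin (θ - α₁)| = arcsin (δ₁ / r) := by
    linarith [min_abs_le_arcsin_abs_sin (α₁ - α₂), monotone_arcsin hb₁, monotone_arcsin hb₂]
  rw [← sin_arcsin_abs_sin, hsq]

/-- If two unit needles in directions `α₁, α₂ ∈ [0,π)` lie entirely outside the open disk
`B_r`, are at distances `δ₁, δ₂` from the origin, and their angular separation (mod π) is
at least `arcsin(δ₁/r) + arcsin(δ₂/r)`, then the interiors of the inner parts
`Δᵢ ∩ B_r` of the corresponding triangles are disjoint. -/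
theorem interior_parts_disjoint (r α₁ α₂ δ₁ δ₂ : ℝ)
    (p₁ p₂ : EuclideanSpace ℝ (Fin 2))
    (hr1 : 0 < r) (hr2 : r ≤ 1 / 2)
    (hα₁ : α₁ ∈ Set.Ico 0 Real.pi) (hα₂ : α₂ ∈ Set.Ico 0 Real.pi)
    (hout₁ : segment ℝ p₁ (p₁ + dirVec α₁) ∩ ball 0 r = ∅)
    (hout₂ : segment ℝ p₂ (p₂ + dirVec α₂) ∩ ball 0 r = ∅)
    (hδ₁ : Metric.infDist 0
      (affineSpan ℝ {p₁, p₁ + dirVec α₁} : Set (EuclideanSpace ℝ (Fin 2))) = δ₁)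
    (hδ₂ : Metric.infDist 0
      (affineSpan ℝ {p₂, p₂ + dirVec α₂} : Set (EuclideanSpace ℝ (Fin 2))) = δ₂)
    (hsep : Real.arcsin (δ₁ / r) + Real.arcsin (δ₂ / r) ≤
      min |α₁ - α₂| (Real.pi - |α₁ - α₂|)) :
    interior ((convexHull ℝ {p₁, p₁ + dirVec α₁, (0 : EuclideanSpace ℝ (Fin 2))}) ∩ ball 0 r) ∩
      interior ((convexHull ℝ {p₂, p₂ + dirVec α₂, (0 : EuclideanSpace ℝ (Fin 2))}) ∩ ball 0 r)
      = ∅ :=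
  interior_parts_disjoint_general r α₁ α₂ δ₁ δ₂ p₁ p₂ hr1 hout₁ hout₂ hδ₁ hδ₂ hsep
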